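/- Let U ⊆ ℝ⁴ be open, let Φ : U → ℝ and h, e : U → ℝ³ be twice continuously differentiable, let ν : U → ℝ³ be continuously differentiable, and assume ∂₁Φ ≠ 0 on U. Let ε > 0. If ε∂ₜ^Φ h + ∇^Φ × e + ε(∇^Φ · h)ν = 0 holds on U, then (∂ₜ^Φ + ν · ∇^Φ)(∇^Φ · h) + (∇^Φ · ν)(∇^Φ · h) = 0 on U. -/

import Mathlib

/-- Partial derivative `∂ᵢ f` on `ℝ⁴` (coordinates `(t, x₁, x₂, x₃)` indexed by `Fin 4`,
with `∂₀ = ∂ₜ`). -/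
noncomputable def pd (i : Fin 4) (f : (Fin 4 → ℝ) → ℝ) (x : Fin 4 → ℝ) : ℝ :=
  fderiv ℝ f x (Pi.single i 1)

/-- Transformed derivative `∂ᵢ^Φ`: `∂ₜ^Φ f = ∂ₜf − (∂ₜΦ/∂₁Φ)∂₁f`,
`∂₁^Φ f = ∂₁f/∂₁Φ`, and `∂ⱼ^Φ f = ∂ⱼf − (∂ⱼΦ/∂₁Φ)∂₁f` for `j = 2, 3`. -/
noncomputable def pdPhi (Φ : (Fin 4 → ℝ) → ℝ) (i : Fin 4) (f : (Fin 4 → ℝ) → ℝ)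
    (x : Fin 4 → ℝ) : ℝ :=
  if i = 1 then pd 1 f x / pd 1 Φ x else pd i f x - pd i Φ x / pd 1 Φ x * pd 1 f x

/-- Transformed divergence `∇^Φ · u = ∂₁^Φu₁ + ∂₂^Φu₂ + ∂₃^Φu₃`. -/
noncomputable def divPhi (Φ : (Fin 4 → ℝ) → ℝ) (u : (Fin 4 → ℝ) → Fin 3 → ℝ)
    (x : Fin 4 → ℝ) : ℝ :=
  pdPhi Φ 1 (fun y => u y 0) x + pdPhi Φ 2 (fun y => u y 1) x + pdPhi Φ 3 (fun y => u y 2) x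

/-- Transformed curl
`∇^Φ × u = (∂₂^Φu₃ − ∂₃^Φu₂, ∂₃^Φu₁ − ∂₁^Φu₃, ∂₁^Φu₂ − ∂₂^Φu₁)`. -/
noncomputable def curlPhi (Φ : (Fin 4 → ℝ) → ℝ) (u : (Fin 4 → ℝ) → Fin 3 → ℝ)
    (x : Fin 4 → ℝ) : Fin 3 → ℝ :=
  ![pdPhi Φ 2 (fun y => u y 2) x - pdPhi Φ 3 (fun y => u y 1) x,
    pdPhi Φ 3 (fun y => u y 0) x - pdPhi Φ 1 (fun y => u y 2) x,
    pdPhi Φ 1 (fun y => u y 1) x - pdPhi Φ 2 (fun y => u y 0) x]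

/-!
Apply `∇^Φ ·` to the equation. The transformed derivatives `∂ᵢ^Φ` commute (they are the
coordinate derivatives in the variables `(t, Φ, x₂, x₃)`; here this is checked directly from
Schwarz's theorem for `Φ` and for the differentiated function), so
`∇^Φ · (∇^Φ × e) = 0` and `∇^Φ · ∂ₜ^Φ h = ∂ₜ^Φ (∇^Φ · h)`, while the Leibniz rule gives
`∇^Φ · ((∇^Φ · h) ν) = (ν · ∇^Φ)(∇^Φ · h) + (∇^Φ · h)(∇^Φ · ν)`. Dividing by `ε` gives the claim.
-/

open Filter Topology

section PartialDerivatives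

variable {f g : (Fin 4 → ℝ) → ℝ} {x : Fin 4 → ℝ} {i j : Fin 4}

lemma pd_sub (hf : DifferentiableAt ℝ f x) (hg : DifferentiableAt ℝ g x) :
    pd i (fun y => f y - g y) x = pd i f x - pd i g x := by
  simp [pd, fderiv_fun_sub hf hg]

lemma pd_mul (hf : DifferentiableAt ℝ f x) (hg : DifferentiableAt ℝ g x) :
    pd i (fun y => f y * g y) x = pd i f x * g x + f x * pd i g x := by
  simp [pd, fderiv_fun_mul hf hg]
  ring

lemma pd_inv (hg : DifferentiableAt ℝ g x) (hgx : g x ≠ 0) :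
    pd i (fun y => (g y)⁻¹) x = -(pd i g x / g x ^ 2) := by
  have hinv : HasFDerivAt (fun y => (g y)⁻¹) (-(g x ^ 2)⁻¹ • fderiv ℝ g x) x :=
    (hasDerivAt_inv hgx).comp_hasFDerivAt x hg.hasFDerivAt
  simp [pd, hinv.fderiv, div_eq_inv_mul]

lemma pd_div (hf : DifferentiableAt ℝ f x) (hg : DifferentiableAt ℝ g x) (hgx : g x ≠ 0) :
    pd i (fun y => f y / g y) x = (pd i f x * g x - f x * pd i g x) / g x ^ 2 := by
  simp only [div_eq_mul_inv]
  rw [pd_mul (g := fun y => (g y)⁻¹) hf (hg.inv hgx), pd_inv hg hgx]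
  field_simp
  ring

lemma contDiffAt_pd {m n : WithTop ℕ∞} (hf : ContDiffAt ℝ n f x) (hmn : m + 1 ≤ n) :
    ContDiffAt ℝ m (pd i f) x :=
  (hf.fderiv_right hmn).clm_apply contDiffAt_const

lemma differentiableAt_pd (hf : ContDiffAt ℝ 2 f x) : DifferentiableAt ℝ (pd i f) x :=
  (contDiffAt_pd (m := 1) hf (by norm_num)).differentiableAt one_ne_zero

lemma pd_pd_comm (hf : ContDiffAt ℝ 2 f x) : pd i (pd j f) x = pd j (pd i f) x := by
  have hdf : DifferentiableAt ℝ (fderiv ℝ f) x :=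
    (hf.fderiv_right (m := 1) (by norm_num)).differentiableAt one_ne_zero
  have hpd : ∀ v w : Fin 4 → ℝ,
      fderiv ℝ (fun y => fderiv ℝ f y v) x w = fderiv ℝ (fderiv ℝ f) x w v := by
    intro v w
    simp [fderiv_clm_apply hdf (differentiableAt_const v)]
  change fderiv ℝ (fun y => fderiv ℝ f y (Pi.single j 1)) x (Pi.single i 1)
      = fderiv ℝ (fun y => fderiv ℝ f y (Pi.single i 1)) x (Pi.single j 1)
  rw [hpd, hpd]
  exact hf.isSymmSndFDerivAt (by simp) _ _

end PartialDerivatives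

noncomputable def dirPhi (Φ : (Fin 4 → ℝ) → ℝ) (k : Fin 4) (x : Fin 4 → ℝ) : Fin 4 → ℝ :=
  if k = 1 then (pd 1 Φ x)⁻¹ • Pi.single 1 1
  else Pi.single k 1 - (pd k Φ x / pd 1 Φ x) • Pi.single 1 1

section TransformedDerivatives

variable {Φ f g : (Fin 4 → ℝ) → ℝ} {x : Fin 4 → ℝ} {i j k : Fin 4}

lemma pdPhi_eq_fderiv : pdPhi Φ k f x = fderiv ℝ f x (dirPhi Φ k x) := by
  unfold pdPhi dirPhi pd
  split_ifs
  · simp [div_eq_inv_mul]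
  · simp

lemma pdPhi_add (hf : DifferentiableAt ℝ f x) (hg : DifferentiableAt ℝ g x) :
    pdPhi Φ k (fun y => f y + g y) x = pdPhi Φ k f x + pdPhi Φ k g x := by
  simp [pdPhi_eq_fderiv, fderiv_fun_add hf hg]

lemma pdPhi_sub (hf : DifferentiableAt ℝ f x) (hg : DifferentiableAt ℝ g x) :
    pdPhi Φ k (fun y => f y - g y) x = pdPhi Φ k f x - pdPhi Φ k g x := by
  simp [pdPhi_eq_fderiv, fderiv_fun_sub hf hg]

lemma pdPhi_const_mul (c : ℝ) (hf : DifferentiableAt ℝ f x) :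
    pdPhi Φ k (fun y => c * f y) x = c * pdPhi Φ k f x := by
  simp [pdPhi_eq_fderiv, fderiv_const_mul hf]

lemma pdPhi_mul (hf : DifferentiableAt ℝ f x) (hg : DifferentiableAt ℝ g x) :
    pdPhi Φ k (fun y => f y * g y) x = pdPhi Φ k f x * g x + f x * pdPhi Φ k g x := by
  simp [pdPhi_eq_fderiv, fderiv_fun_mul hf hg]
  ring

lemma pdPhi_sum {ι : Type*} {s : Finset ι} {F : ι → (Fin 4 → ℝ) → ℝ}
    (hF : ∀ n ∈ s, DifferentiableAt ℝ (F n) x) :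
    pdPhi Φ k (fun y => ∑ n ∈ s, F n y) x = ∑ n ∈ s, pdPhi Φ k (F n) x := by
  simp [pdPhi_eq_fderiv, fderiv_fun_sum hF]

lemma pdPhi_const (c : ℝ) : pdPhi Φ k (fun _ => c) x = 0 := by
  simp [pdPhi_eq_fderiv]

lemma _root_.Filter.EventuallyEq.pdPhi_eq (hfg : f =ᶠ[𝓝 x] g) :
    pdPhi Φ k f x = pdPhi Φ k g x := by
  simp [pdPhi_eq_fderiv, hfg.fderiv_eq]

lemma pdPhi_one : pdPhi Φ 1 f = fun y => pd 1 f y / pd 1 Φ y := by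
  funext y
  simp [pdPhi]

lemma pdPhi_of_ne_one (hk : k ≠ 1) :
    pdPhi Φ k f = fun y => pd k f y - pd k Φ y / pd 1 Φ y * pd 1 f y := by
  funext y
  simp [pdPhi, hk]

lemma contDiffAt_pdPhi {m n : WithTop ℕ∞} (hΦ : ContDiffAt ℝ n Φ x) (hΦ1 : pd 1 Φ x ≠ 0)
    (hf : ContDiffAt ℝ n f x) (hmn : m + 1 ≤ n) : ContDiffAt ℝ m (pdPhi Φ k f) x := by
  by_cases hk : k = 1
  · rw [hk, pdPhi_one]
    exact (contDiffAt_pd hf hmn).div (contDiffAt_pd hΦ hmn) hΦ1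
  · rw [pdPhi_of_ne_one hk]
    exact (contDiffAt_pd hf hmn).sub
      (((contDiffAt_pd hΦ hmn).div (contDiffAt_pd hΦ hmn) hΦ1).mul (contDiffAt_pd hf hmn))

lemma differentiableAt_pdPhi (hΦ : ContDiffAt ℝ 2 Φ x) (hΦ1 : pd 1 Φ x ≠ 0)
    (hf : ContDiffAt ℝ 2 f x) : DifferentiableAt ℝ (pdPhi Φ k f) x :=
  (contDiffAt_pdPhi (m := 1) hΦ hΦ1 hf (by norm_num)).differentiableAt one_ne_zero

lemma pd_pdPhi_one (hΦ : ContDiffAt ℝ 2 Φ x) (hΦ1 : pd 1 Φ x ≠ 0) (hf : ContDiffAt ℝ 2 f x) :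
    pd i (pdPhi Φ 1 f) x
      = (pd i (pd 1 f) x * pd 1 Φ x - pd 1 f x * pd i (pd 1 Φ) x) / pd 1 Φ x ^ 2 := by
  rw [pdPhi_one, pd_div (differentiableAt_pd hf) (differentiableAt_pd hΦ) hΦ1]

lemma pd_pdPhi_of_ne_one (hj : j ≠ 1) (hΦ : ContDiffAt ℝ 2 Φ x) (hΦ1 : pd 1 Φ x ≠ 0)
    (hf : ContDiffAt ℝ 2 f x) :
    pd i (pdPhi Φ j f) x
      = pd i (pd j f) x
        - ((pd i (pd j Φ) x * pd 1 Φ x - pd j Φ x * pd i (pd 1 Φ) x) / pd 1 Φ x ^ 2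
            * pd 1 f x + pd j Φ x / pd 1 Φ x * pd i (pd 1 f) x) := by
  have hq : DifferentiableAt ℝ (fun y => pd j Φ y / pd 1 Φ y) x := by
    simpa only [div_eq_mul_inv] using
      (differentiableAt_pd hΦ).fun_mul ((differentiableAt_pd hΦ).fun_inv hΦ1)
  rw [pdPhi_of_ne_one hj,
    pd_sub (g := fun y => pd j Φ y / pd 1 Φ y * pd 1 f y) (differentiableAt_pd hf)
      (hq.mul (differentiableAt_pd hf)),
    pd_mul hq (differentiableAt_pd hf),
    pd_div (differentiableAt_pd hΦ) (differentiableAt_pd hΦ) hΦ1]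

lemma pdPhi_one_comm (hj : j ≠ 1) (hΦ : ContDiffAt ℝ 2 Φ x) (hΦ1 : pd 1 Φ x ≠ 0)
    (hf : ContDiffAt ℝ 2 f x) :
    pdPhi Φ 1 (pdPhi Φ j f) x = pdPhi Φ j (pdPhi Φ 1 f) x := by
  simp only [pdPhi, hj, if_true, if_false]
  rw [pd_pdPhi_of_ne_one hj hΦ hΦ1 hf, pd_pdPhi_one hΦ hΦ1 hf, pd_pdPhi_one hΦ hΦ1 hf,
    pd_pd_comm (i := j) hf, pd_pd_comm (i := j) hΦ]
  field_simp
  ring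

lemma pdPhi_comm_of_ne_one (hi : i ≠ 1) (hj : j ≠ 1) (hΦ : ContDiffAt ℝ 2 Φ x)
    (hΦ1 : pd 1 Φ x ≠ 0) (hf : ContDiffAt ℝ 2 f x) :
    pdPhi Φ i (pdPhi Φ j f) x = pdPhi Φ j (pdPhi Φ i f) x := by
  simp only [pdPhi, hi, hj, if_false]
  rw [pd_pdPhi_of_ne_one hj hΦ hΦ1 hf, pd_pdPhi_of_ne_one hj hΦ hΦ1 hf,
    pd_pdPhi_of_ne_one hi hΦ hΦ1 hf, pd_pdPhi_of_ne_one hi hΦ hΦ1 hf,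
    pd_pd_comm (i := j) (j := i) hf, pd_pd_comm (i := j) (j := i) hΦ,
    pd_pd_comm (i := 1) (j := i) hf, pd_pd_comm (i := 1) (j := i) hΦ,
    pd_pd_comm (i := 1) (j := j) hf, pd_pd_comm (i := 1) (j := j) hΦ]
  field_simp
  ring

lemma pdPhi_comm (hΦ : ContDiffAt ℝ 2 Φ x) (hΦ1 : pd 1 Φ x ≠ 0) (hf : ContDiffAt ℝ 2 f x)
    (i j : Fin 4) : pdPhi Φ i (pdPhi Φ j f) x = pdPhi Φ j (pdPhi Φ i f) x := by
  by_cases hi : i = 1 <;> by_cases hj : j = 1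
  · rw [hi, hj]
  · rw [hi]; exact pdPhi_one_comm hj hΦ hΦ1 hf
  · rw [hj]; exact (pdPhi_one_comm hi hΦ hΦ1 hf).symm
  · exact pdPhi_comm_of_ne_one hi hj hΦ hΦ1 hf

end TransformedDerivatives

noncomputable def pdPhiVec (Φ : (Fin 4 → ℝ) → ℝ) (k : Fin 4) (u : (Fin 4 → ℝ) → Fin 3 → ℝ)
    (x : Fin 4 → ℝ) : Fin 3 → ℝ :=
  fun i => pdPhi Φ k (fun y => u y i) x

section VectorCalculus

variable {Φ f : (Fin 4 → ℝ) → ℝ} {u v : (Fin 4 → ℝ) → Fin 3 → ℝ} {x : Fin 4 → ℝ}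

lemma divPhi_eq_sum : divPhi Φ u x = ∑ j : Fin 3, pdPhi Φ j.succ (fun y => u y j) x := by
  simp [divPhi, Fin.sum_univ_three]

lemma _root_.Filter.EventuallyEq.divPhi_eq (huv : u =ᶠ[𝓝 x] v) :
    divPhi Φ u x = divPhi Φ v x := by
  simp only [divPhi_eq_sum]
  exact Finset.sum_congr rfl fun j _ =>
    Filter.EventuallyEq.pdPhi_eq (huv.mono fun y hy => congrFun hy j)

lemma divPhi_zero : divPhi Φ 0 x = 0 := by
  simp [divPhi_eq_sum, pdPhi_const]

lemma divPhi_add (hu : DifferentiableAt ℝ u x) (hv : DifferentiableAt ℝ v x) :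
    divPhi Φ (fun y => u y + v y) x = divPhi Φ u x + divPhi Φ v x := by
  simp only [divPhi_eq_sum, Pi.add_apply, ← Finset.sum_add_distrib]
  exact Finset.sum_congr rfl fun j _ =>
    pdPhi_add (differentiableAt_pi.1 hu j) (differentiableAt_pi.1 hv j)

lemma divPhi_const_smul (c : ℝ) (hu : DifferentiableAt ℝ u x) :
    divPhi Φ (fun y => c • u y) x = c * divPhi Φ u x := by
  simp only [divPhi_eq_sum, Pi.smul_apply, smul_eq_mul, Finset.mul_sum]
  exact Finset.sum_congr rfl fun j _ => pdPhi_const_mul c (differentiableAt_pi.1 hu j)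

lemma divPhi_smul (hf : DifferentiableAt ℝ f x) (hu : DifferentiableAt ℝ u x) :
    divPhi Φ (fun y => f y • u y) x
      = ∑ j : Fin 3, u x j * pdPhi Φ j.succ f x + f x * divPhi Φ u x := by
  simp only [divPhi_eq_sum, Pi.smul_apply, smul_eq_mul, Finset.mul_sum, ← Finset.sum_add_distrib]
  refine Finset.sum_congr rfl fun j _ => ?_
  rw [pdPhi_mul hf (differentiableAt_pi.1 hu j)]
  ring

lemma differentiableAt_pdPhiVec (hΦ : ContDiffAt ℝ 2 Φ x) (hΦ1 : pd 1 Φ x ≠ 0)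
    (hu : ContDiffAt ℝ 2 u x) (k : Fin 4) : DifferentiableAt ℝ (pdPhiVec Φ k u) x :=
  differentiableAt_pi.2 fun i => differentiableAt_pdPhi hΦ hΦ1 (contDiffAt_pi.1 hu i)

lemma differentiableAt_divPhi (hΦ : ContDiffAt ℝ 2 Φ x) (hΦ1 : pd 1 Φ x ≠ 0)
    (hu : ContDiffAt ℝ 2 u x) : DifferentiableAt ℝ (divPhi Φ u) x := by
  have hdiff (k : Fin 4) (i : Fin 3) : DifferentiableAt ℝ (pdPhi Φ k fun y => u y i) x :=
    differentiableAt_pdPhi hΦ hΦ1 (contDiffAt_pi.1 hu i)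
  exact ((hdiff 1 0).add (hdiff 2 1)).add (hdiff 3 2)

lemma differentiableAt_curlPhi (hΦ : ContDiffAt ℝ 2 Φ x) (hΦ1 : pd 1 Φ x ≠ 0)
    (hu : ContDiffAt ℝ 2 u x) : DifferentiableAt ℝ (curlPhi Φ u) x := by
  have hdiff (k : Fin 4) (i : Fin 3) : DifferentiableAt ℝ (pdPhi Φ k fun y => u y i) x :=
    differentiableAt_pdPhi hΦ hΦ1 (contDiffAt_pi.1 hu i)
  refine differentiableAt_pi.2 fun i => ?_
  fin_cases i
  · exact (hdiff 2 2).sub (hdiff 3 1)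
  · exact (hdiff 3 0).sub (hdiff 1 2)
  · exact (hdiff 1 1).sub (hdiff 2 0)

lemma divPhi_pdPhiVec (hΦ : ContDiffAt ℝ 2 Φ x) (hΦ1 : pd 1 Φ x ≠ 0)
    (hu : ContDiffAt ℝ 2 u x) (k : Fin 4) :
    divPhi Φ (pdPhiVec Φ k u) x = pdPhi Φ k (divPhi Φ u) x := by
  have hdiv : divPhi Φ u = fun y => ∑ j : Fin 3, pdPhi Φ j.succ (fun z => u z j) y :=
    funext fun y => divPhi_eq_sum
  rw [divPhi_eq_sum, hdiv,
    pdPhi_sum fun j _ => differentiableAt_pdPhi hΦ hΦ1 (contDiffAt_pi.1 hu j)]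
  exact Finset.sum_congr rfl fun j _ => pdPhi_comm hΦ hΦ1 (contDiffAt_pi.1 hu j) _ _

lemma divPhi_curlPhi (hΦ : ContDiffAt ℝ 2 Φ x) (hΦ1 : pd 1 Φ x ≠ 0)
    (hu : ContDiffAt ℝ 2 u x) : divPhi Φ (curlPhi Φ u) x = 0 := by
  have hdiff (k : Fin 4) (i : Fin 3) : DifferentiableAt ℝ (pdPhi Φ k fun y => u y i) x :=
    differentiableAt_pdPhi hΦ hΦ1 (contDiffAt_pi.1 hu i)
  have hcomm (i : Fin 3) := pdPhi_comm hΦ hΦ1 (contDiffAt_pi.1 hu i)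
  simp only [divPhi, curlPhi, Matrix.cons_val]
  rw [pdPhi_sub (hdiff 2 2) (hdiff 3 1), pdPhi_sub (hdiff 3 0) (hdiff 1 2),
    pdPhi_sub (hdiff 1 1) (hdiff 2 0)]
  linear_combination hcomm 2 1 2 + hcomm 1 3 1 + hcomm 0 2 3

lemma divPhi_maxwell_field {h e ν : (Fin 4 → ℝ) → Fin 3 → ℝ} (ε : ℝ) (k : Fin 4)
    (hΦ : ContDiffAt ℝ 2 Φ x) (hΦ1 : pd 1 Φ x ≠ 0) (hh : ContDiffAt ℝ 2 h x)
    (he : ContDiffAt ℝ 2 e x) (hν : DifferentiableAt ℝ ν x) :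
    divPhi Φ (fun y => ε • (pdPhiVec Φ k h y + divPhi Φ h y • ν y) + curlPhi Φ e y) x
      = ε * (pdPhi Φ k (divPhi Φ h) x + ∑ j : Fin 3, ν x j * pdPhi Φ j.succ (divPhi Φ h) x
          + divPhi Φ h x * divPhi Φ ν x) := by
  have hdivh := differentiableAt_divPhi hΦ hΦ1 hh
  have hdt := differentiableAt_pdPhiVec hΦ hΦ1 hh k
  have hflux : DifferentiableAt ℝ (fun y => divPhi Φ h y • ν y) x := hdivh.smul hν
  have hsrc : DifferentiableAt ℝ (fun y => pdPhiVec Φ k h y + divPhi Φ h y • ν y) x :=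
    hdt.add hflux
  rw [divPhi_add (u := fun y => ε • _) (hsrc.const_smul ε) (differentiableAt_curlPhi hΦ hΦ1 he),
    divPhi_curlPhi hΦ hΦ1 he, divPhi_const_smul ε hsrc,
    divPhi_add (v := fun y => _ • _) hdt hflux, divPhi_pdPhiVec hΦ hΦ1 hh,
    divPhi_smul hdivh hν, add_zero, add_assoc]

end VectorCalculus

/-- If the reduced vacuum Maxwell equation `ε∂ₜ^Φ h + ∇^Φ × e + ε(∇^Φ · h)ν = 0` holds on
an open set `U` (with `Φ, h, e` twice continuously differentiable, `ν` continuously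
differentiable, and `∂₁Φ ≠ 0` on `U`), then
`(∂ₜ^Φ + ν·∇^Φ)(∇^Φ·h) + (∇^Φ·ν)(∇^Φ·h) = 0` on `U`. -/
theorem stmt_13 (ε : ℝ) (hε : 0 < ε) (U : Set (Fin 4 → ℝ)) (hU : IsOpen U)
    (Φ : (Fin 4 → ℝ) → ℝ) (h e ν : (Fin 4 → ℝ) → Fin 3 → ℝ)
    (hΦ : ContDiffOn ℝ 2 Φ U) (hh : ContDiffOn ℝ 2 h U) (he : ContDiffOn ℝ 2 e U)
    (hν : ContDiffOn ℝ 1 ν U)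
    (hΦ1 : ∀ x ∈ U, pd 1 Φ x ≠ 0)
    (heq : ∀ x ∈ U, ∀ i : Fin 3,
      ε * pdPhi Φ 0 (fun y => h y i) x + curlPhi Φ e x i
        + ε * divPhi Φ h x * ν x i = 0) :
    ∀ x ∈ U,
      pdPhi Φ 0 (divPhi Φ h) x
        + (∑ j : Fin 3, ν x j * pdPhi Φ j.succ (divPhi Φ h) x)
        + divPhi Φ ν x * divPhi Φ h x = 0 := by
  intro x hx
  have hUx : U ∈ 𝓝 x := hU.mem_nhds hx
  have hmaxwell : (fun y => ε • (pdPhiVec Φ 0 h y + divPhi Φ h y • ν y) + curlPhi Φ e y)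
      =ᶠ[𝓝 x] 0 := by
    filter_upwards [hUx] with y hy
    funext i
    simp only [Pi.add_apply, Pi.smul_apply, smul_eq_mul, pdPhiVec, Pi.zero_apply]
    linear_combination heq y hy i
  have hdiv := hmaxwell.divPhi_eq (Φ := Φ)
  rw [divPhi_zero, divPhi_maxwell_field ε 0 (hΦ.contDiffAt hUx) (hΦ1 x hx) (hh.contDiffAt hUx)
    (he.contDiffAt hUx) ((hν.contDiffAt hUx).differentiableAt one_ne_zero)] at hdiv
  apply mul_left_cancel₀ hε.ne'
  linear_combination hdiv
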